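/- Let Q be a generalised quadrangle with point-line incidence graph Γ, let C be a code in Γ with minimum distance δ equal to 3 or 4, and let p be a point of Q with p ∈ C. Then C is neighbour-transitive if and only if Aut(C) acts transitively on C and the stabiliser Aut(C)_p of p in Aut(C) acts transitively on the set of all lines of Q incident with p. -/

import Mathlib

/-- A finite generalised quadrangle of order `(s,t)`: each point is on `t+1` lines,
each line has `s+1` points, two distinct points lie on at most one common line,
two distinct lines meet in at most one common point, and for each non-incident
point-line pair `(p, ℓ)` there is a unique pair `(q, M)` with `p I M`, `q I M`
and `q I ℓ`. -/
structure GenQuad (P L : Type*) (s t : ℕ) where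
  I : P → L → Prop
  point_deg : ∀ p : P, Nat.card {ℓ : L // I p ℓ} = t + 1
  line_deg : ∀ ℓ : L, Nat.card {p : P // I p ℓ} = s + 1
  points_one_line : ∀ p₁ p₂ : P, p₁ ≠ p₂ → ∀ ℓ₁ ℓ₂ : L,
    I p₁ ℓ₁ → I p₂ ℓ₁ → I p₁ ℓ₂ → I p₂ ℓ₂ → ℓ₁ = ℓ₂
  lines_one_point : ∀ ℓ₁ ℓ₂ : L, ℓ₁ ≠ ℓ₂ → ∀ p₁ p₂ : P,
    I p₁ ℓ₁ → I p₁ ℓ₂ → I p₂ ℓ₁ → I p₂ ℓ₂ → p₁ = p₂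
  gq_axiom : ∀ (p : P) (ℓ : L), ¬ I p ℓ →
    ∃! qM : P × L, I p qM.2 ∧ I qM.1 qM.2 ∧ I qM.1 ℓ

/-- The point-line incidence graph of a generalised quadrangle. -/
def incGraph {P L : Type*} {s t : ℕ} (Q : GenQuad P L s t) : SimpleGraph (P ⊕ L) where
  Adj x y :=
    (∃ p ℓ, x = Sum.inl p ∧ y = Sum.inr ℓ ∧ Q.I p ℓ) ∨
    (∃ p ℓ, x = Sum.inr ℓ ∧ y = Sum.inl p ∧ Q.I p ℓ)
  symm := by
    constructor
    rintro x y (⟨p, ℓ, rfl, rfl, h⟩ | ⟨p, ℓ, rfl, rfl, h⟩)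
    · exact Or.inr ⟨p, ℓ, rfl, rfl, h⟩
    · exact Or.inl ⟨p, ℓ, rfl, rfl, h⟩
  loopless := by
    constructor
    rintro x (⟨p, ℓ, rfl, h, -⟩ | ⟨p, ℓ, rfl, h, -⟩) <;> exact absurd h (by simp)

/-- The minimum distance of a code `C` in a graph `Γ`. -/
noncomputable def minDist {V : Type*} (Γ : SimpleGraph V) (C : Set V) : ℕ :=
  sInf {d | ∃ x ∈ C, ∃ y ∈ C, x ≠ y ∧ Γ.dist x y = d}

/-- The distance from a vertex `γ` to a code `C`. -/
noncomputable def distToCode {V : Type*} (Γ : SimpleGraph V) (C : Set V) (γ : V) : ℕ :=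
  sInf {d | ∃ x ∈ C, Γ.dist γ x = d}

/-- The covering radius of a code `C` in a graph `Γ`. -/
noncomputable def covRad {V : Type*} (Γ : SimpleGraph V) (C : Set V) : ℕ :=
  sSup {d | ∃ γ : V, distToCode Γ C γ = d}

/-- `nbhd Γ C i` is the set `C_i` of vertices at distance exactly `i` from `C`. -/
def nbhd {V : Type*} (Γ : SimpleGraph V) (C : Set V) (i : ℕ) : Set V :=
  {γ | distToCode Γ C γ = i}

/-- `g` is an automorphism of the graph `Γ`. -/
def IsGraphAut {V : Type*} (Γ : SimpleGraph V) (g : V ≃ V) : Prop :=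
  ∀ x y : V, Γ.Adj (g x) (g y) ↔ Γ.Adj x y

/-- `Aut(C)` (automorphisms of `Γ` preserving `C` setwise) acts transitively on `S`. -/
def TransOn {V : Type*} (Γ : SimpleGraph V) (C S : Set V) : Prop :=
  ∀ x ∈ S, ∀ y ∈ S, ∃ g : V ≃ V, IsGraphAut Γ g ∧ (∀ v, g v ∈ C ↔ v ∈ C) ∧ g x = y

/-- `C` is neighbour-transitive: `Aut(C)` is transitive on `C` and on `C₁`. -/
def NeighbourTransitive {V : Type*} (Γ : SimpleGraph V) (C : Set V) : Prop :=
  TransOn Γ C C ∧ TransOn Γ C (nbhd Γ C 1)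

/-!
The equivalence holds for any code of minimum distance at least 3 in a connected graph, with `p`
any codeword; the incidence graph of a generalised quadrangle is connected, and the neighbours of
a point are the lines through it. Since δ ≥ 3, the neighbours of a codeword `c` lie in `C₁`, and
each element of `C₁` has a unique codeword neighbour. So an element of `Aut(C)` mapping one
neighbour of `c` to another must fix `c`; conversely, transitivity on `C` moves the codeword
neighbours of any two elements of `C₁` onto `c`, and `Aut(C)_c` finishes the job.
-/

section CodesInGraphs

variable {V : Type*} {Γ : SimpleGraph V} {C : Set V}

/-- `g ∈ Aut(C)`. -/
def IsCodeAut (Γ : SimpleGraph V) (C : Set V) (g : V ≃ V) : Prop :=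
  IsGraphAut Γ g ∧ ∀ v, g v ∈ C ↔ v ∈ C

def StabilizerTransOnNeighbors (Γ : SimpleGraph V) (C : Set V) (c : V) : Prop :=
  ∀ x y, Γ.Adj c x → Γ.Adj c y →
    ∃ g : V ≃ V, IsGraphAut Γ g ∧ (∀ v, g v ∈ C ↔ v ∈ C) ∧ g c = c ∧ g x = y

lemma IsCodeAut.symm {g : V ≃ V} (hg : IsCodeAut Γ C g) : IsCodeAut Γ C g.symm :=
  ⟨fun x y => by simpa using (hg.1 (g.symm x) (g.symm y)).symm,
    fun v => by simpa using (hg.2 (g.symm v)).symm⟩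

lemma IsCodeAut.trans {g h : V ≃ V} (hg : IsCodeAut Γ C g) (hh : IsCodeAut Γ C h) :
    IsCodeAut Γ C (g.trans h) :=
  ⟨fun x y => (hh.1 (g x) (g y)).trans (hg.1 x y), fun v => (hh.2 (g v)).trans (hg.2 v)⟩

lemma minDist_le_dist {x y : V} (hx : x ∈ C) (hy : y ∈ C) (hxy : x ≠ y) :
    minDist Γ C ≤ Γ.dist x y :=
  Nat.sInf_le ⟨x, hx, y, hy, hxy, rfl⟩

lemma notMem_of_adj_of_three_le_minDist (hδ : 3 ≤ minDist Γ C) {c x : V} (hc : c ∈ C)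
    (hcx : Γ.Adj c x) : x ∉ C := fun hx => by
  have := minDist_le_dist (Γ := Γ) hc hx hcx.ne
  rw [SimpleGraph.dist_eq_one_iff_adj.mpr hcx] at this
  omega

lemma eq_of_adj_of_three_le_minDist (hδ : 3 ≤ minDist Γ C) {c c' x : V} (hc : c ∈ C)
    (hc' : c' ∈ C) (hcx : Γ.Adj c x) (hc'x : Γ.Adj c' x) : c = c' := by
  by_contra hne
  have h2 : Γ.dist c c' ≤ 2 := SimpleGraph.dist_le (hcx.toWalk.append hc'x.symm.toWalk)
  have := minDist_le_dist (Γ := Γ) hc hc' hne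
  omega

lemma exists_adj_mem_of_mem_nbhd_one {z : V} (hz : z ∈ nbhd Γ C 1) : ∃ c ∈ C, Γ.Adj z c := by
  have hz' : sInf {d | ∃ c ∈ C, Γ.dist z c = d} = 0 + 1 := hz
  obtain ⟨c, hc, hzc⟩ := hz' ▸ Nat.sInf_mem (Nat.nonempty_of_sInf_eq_succ hz')
  exact ⟨c, hc, SimpleGraph.dist_eq_one_iff_adj.mp hzc⟩

lemma mem_nbhd_one_of_adj (hΓ : Γ.Preconnected) {z c : V} (hz : z ∉ C) (hc : c ∈ C)
    (hzc : Γ.Adj z c) : z ∈ nbhd Γ C 1 := by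
  have h1 : 1 ∈ {d | ∃ c ∈ C, Γ.dist z c = d} :=
    ⟨c, hc, SimpleGraph.dist_eq_one_iff_adj.mpr hzc⟩
  have hle : distToCode Γ C z ≤ 1 := Nat.sInf_le h1
  have hne : distToCode Γ C z ≠ 0 := fun h0 => by
    obtain ⟨c', hc', hzc'⟩ :=
      (Nat.sInf_eq_zero.1 h0).resolve_right (Set.nonempty_of_mem h1).ne_empty
    exact hz (((hΓ z c').dist_eq_zero_iff.mp hzc') ▸ hc')
  show distToCode Γ C z = 1
  omega

lemma stabilizerTransOnNeighbors_of_transOn_nbhd_one (hΓ : Γ.Preconnected)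
    (hδ : 3 ≤ minDist Γ C) {c : V} (hc : c ∈ C) (h : TransOn Γ C (nbhd Γ C 1)) :
    StabilizerTransOnNeighbors Γ C c := by
  intro x y hx hy
  have mem : ∀ z, Γ.Adj c z → z ∈ nbhd Γ C 1 := fun z hz =>
    mem_nbhd_one_of_adj hΓ (notMem_of_adj_of_three_le_minDist hδ hc hz) hc hz.symm
  obtain ⟨g, hg, hgC, hgx⟩ := h x (mem x hx) y (mem y hy)
  have hgc : Γ.Adj (g c) y := hgx ▸ (hg c x).2 hx
  exact ⟨g, hg, hgC, eq_of_adj_of_three_le_minDist hδ ((hgC c).2 hc) hc hgc hy, hgx⟩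

lemma transOn_nbhd_one_of_stabilizerTransOnNeighbors {c : V} (hC : TransOn Γ C C)
    (hc : c ∈ C) (hstab : StabilizerTransOnNeighbors Γ C c) : TransOn Γ C (nbhd Γ C 1) := by
  intro x hx y hy
  obtain ⟨cx, hcx, hxcx⟩ := exists_adj_mem_of_mem_nbhd_one hx
  obtain ⟨cy, hcy, hycy⟩ := exists_adj_mem_of_mem_nbhd_one hy
  obtain ⟨g₁, hg₁, hg₁C, hg₁c⟩ := hC cx hcx c hc
  obtain ⟨g₂, hg₂, hg₂C, hg₂c⟩ := hC cy hcy c hc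
  obtain ⟨h, hh, hhC, -, hhx⟩ :=
    hstab (g₁ x) (g₂ y) (hg₁c ▸ (hg₁ cx x).2 hxcx.symm) (hg₂c ▸ (hg₂ cy y).2 hycy.symm)
  have hg : IsCodeAut Γ C (g₁.trans (h.trans g₂.symm)) :=
    IsCodeAut.trans ⟨hg₁, hg₁C⟩ (IsCodeAut.trans ⟨hh, hhC⟩ (IsCodeAut.symm ⟨hg₂, hg₂C⟩))
  exact ⟨_, hg.1, hg.2, by simp [hhx]⟩

theorem neighbourTransitive_iff_stabilizerTransOnNeighbors (hΓ : Γ.Preconnected)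
    (hδ : 3 ≤ minDist Γ C) {c : V} (hc : c ∈ C) :
    NeighbourTransitive Γ C ↔ TransOn Γ C C ∧ StabilizerTransOnNeighbors Γ C c :=
  ⟨fun h => ⟨h.1, stabilizerTransOnNeighbors_of_transOn_nbhd_one hΓ hδ hc h.2⟩,
    fun h => ⟨h.1, transOn_nbhd_one_of_stabilizerTransOnNeighbors h.1 hc h.2⟩⟩

end CodesInGraphs

namespace GenQuad

variable {P L : Type*} {s t : ℕ} (Q : GenQuad P L s t)

lemma exists_line (p : P) : ∃ ℓ, Q.I p ℓ := by
  obtain ⟨⟨ℓ, hℓ⟩⟩ := (Nat.card_pos_iff.mp (by rw [Q.point_deg p]; omega)).1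
  exact ⟨ℓ, hℓ⟩

lemma exists_point (ℓ : L) : ∃ p, Q.I p ℓ := by
  obtain ⟨⟨p, hp⟩⟩ := (Nat.card_pos_iff.mp (by rw [Q.line_deg ℓ]; omega)).1
  exact ⟨p, hp⟩

lemma incGraph_adj_inl_iff {p : P} {x : P ⊕ L} :
    (incGraph Q).Adj (Sum.inl p) x ↔ ∃ ℓ, x = Sum.inr ℓ ∧ Q.I p ℓ := by
  cases x <;> simp [incGraph]

lemma incGraph_adj_inl_inr {p : P} {ℓ : L} :
    (incGraph Q).Adj (Sum.inl p) (Sum.inr ℓ) ↔ Q.I p ℓ := by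
  simp [incGraph_adj_inl_iff]

lemma incGraph_reachable_inl_inr (p : P) (ℓ : L) :
    (incGraph Q).Reachable (Sum.inl p) (Sum.inr ℓ) := by
  by_cases h : Q.I p ℓ
  · exact ((Q.incGraph_adj_inl_inr).2 h).reachable
  · obtain ⟨⟨q, M⟩, ⟨hpM, hqM, hqℓ⟩, -⟩ := Q.gq_axiom p ℓ h
    exact (((Q.incGraph_adj_inl_inr).2 hpM).reachable.trans
      ((Q.incGraph_adj_inl_inr).2 hqM).reachable.symm).trans
      ((Q.incGraph_adj_inl_inr).2 hqℓ).reachable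

lemma incGraph_preconnected : (incGraph Q).Preconnected := by
  rintro (p | ℓ) (q | m)
  · obtain ⟨ℓ, hℓ⟩ := Q.exists_line q
    exact (Q.incGraph_reachable_inl_inr p ℓ).trans (Q.incGraph_reachable_inl_inr q ℓ).symm
  · exact Q.incGraph_reachable_inl_inr p m
  · exact (Q.incGraph_reachable_inl_inr q ℓ).symm
  · obtain ⟨q, hq⟩ := Q.exists_point m
    exact (Q.incGraph_reachable_inl_inr q ℓ).symm.trans (Q.incGraph_reachable_inl_inr q m)

lemma stabilizerTransOnNeighbors_inl_iff (C : Set (P ⊕ L)) (p : P) :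
    StabilizerTransOnNeighbors (incGraph Q) C (Sum.inl p) ↔
      ∀ ℓ₁ ℓ₂ : L, Q.I p ℓ₁ → Q.I p ℓ₂ →
        ∃ g : (P ⊕ L) ≃ (P ⊕ L), IsGraphAut (incGraph Q) g ∧ (∀ v, g v ∈ C ↔ v ∈ C) ∧
          g (Sum.inl p) = Sum.inl p ∧ g (Sum.inr ℓ₁) = Sum.inr ℓ₂ := by
  refine ⟨fun h ℓ₁ ℓ₂ h₁ h₂ =>
    h _ _ ((Q.incGraph_adj_inl_inr).2 h₁) ((Q.incGraph_adj_inl_inr).2 h₂), ?_⟩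
  intro h x y hx hy
  obtain ⟨ℓ₁, rfl, h₁⟩ := (Q.incGraph_adj_inl_iff).1 hx
  obtain ⟨ℓ₂, rfl, h₂⟩ := (Q.incGraph_adj_inl_iff).1 hy
  exact h ℓ₁ ℓ₂ h₁ h₂

end GenQuad

theorem stmt2_general {P L : Type*} {s t : ℕ}
    (Q : GenQuad P L s t)
    (C : Set (P ⊕ L))
    (hδ : minDist (incGraph Q) C = 3 ∨ minDist (incGraph Q) C = 4)
    (p : P) (hp : Sum.inl p ∈ C) :
    NeighbourTransitive (incGraph Q) C ↔
      (TransOn (incGraph Q) C C ∧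
        ∀ ℓ₁ ℓ₂ : L, Q.I p ℓ₁ → Q.I p ℓ₂ →
          ∃ g : (P ⊕ L) ≃ (P ⊕ L), IsGraphAut (incGraph Q) g ∧
            (∀ v, g v ∈ C ↔ v ∈ C) ∧
            g (Sum.inl p) = Sum.inl p ∧ g (Sum.inr ℓ₁) = Sum.inr ℓ₂) := by
  rw [← Q.stabilizerTransOnNeighbors_inl_iff]
  exact neighbourTransitive_iff_stabilizerTransOnNeighbors Q.incGraph_preconnected
    (by omega) hp

/-- For a code `C` with minimum distance `3` or `4` containing a point `p`,
`C` is neighbour-transitive iff `Aut(C)` is transitive on `C` and the stabiliser of `p`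
is transitive on the lines through `p`. -/
theorem stmt2 {P L : Type*} [Finite P] [Finite L] {s t : ℕ}
    (Q : GenQuad P L s t) (hs : 1 ≤ s) (ht : 1 ≤ t)
    (C : Set (P ⊕ L))
    (hδ : minDist (incGraph Q) C = 3 ∨ minDist (incGraph Q) C = 4)
    (p : P) (hp : Sum.inl p ∈ C) :
    NeighbourTransitive (incGraph Q) C ↔
      (TransOn (incGraph Q) C C ∧
        ∀ ℓ₁ ℓ₂ : L, Q.I p ℓ₁ → Q.I p ℓ₂ →
          ∃ g : (P ⊕ L) ≃ (P ⊕ L), IsGraphAut (incGraph Q) g ∧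
            (∀ v, g v ∈ C ↔ v ∈ C) ∧
            g (Sum.inl p) = Sum.inl p ∧ g (Sum.inr ℓ₁) = Sum.inr ℓ₂) :=
  stmt2_general Q C hδ p hp
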